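/- Suppose the matrix J = (J_{𝔍𝔍'})_{𝔍,𝔍'∈𝒫₊} of coupling constants of the Hamiltonian H (assumed reflection invariant and globally gauge invariant) is positive semidefinite. Then the partition sum Z_{βH} = Tr(e^{−βH}) is a non-decreasing function of β ≥ 0 with Z₀ = 1; in particular 1 ≤ Z_{βH} for all β ≥ 0. -/

import Mathlib

open ComplexOrder

noncomputable section

/-- The setting of the paper: a finite set `Λ` with a fixed-point free involution `ϑ`
exchanging `Λp` and its complement, the Clifford algebra (algebra of Majoranas) `carrier`
with self-adjoint generators `c i`, the global gauge automorphism `gauge`, the antilinear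
reflection `*`-automorphism `Θ`, a square root `ζ` of `-1`, the twisted product `twist`,
a choice `P` of orderings of the subsets of `Λp` (giving the bases
`{C J : J ∈ P}` of `𝔄₊` and `{Θ(C J) ∘ C J' : J, J' ∈ P}` of `𝔄`),
and the tracial state `Tr` picking out the coefficient of `1` in the basis expansion. -/
structure MajoranaSetting where
  Λ : Type
  [fintypeΛ : Fintype Λ]
  [deceqΛ : DecidableEq Λ]
  ϑ : Λ → Λ
  ϑ_invol : Function.Involutive ϑ
  ϑ_fixfree : ∀ i, ϑ i ≠ i
  Λp : Finset Λ
  ϑ_exch : ∀ i, i ∈ Λp ↔ ϑ i ∉ Λp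
  carrier : Type
  [nring : NormedRing carrier]
  [nalg : NormedAlgebra ℂ carrier]
  [cmpl : CompleteSpace carrier]
  [starring : StarRing carrier]
  [starmod : StarModule ℂ carrier]
  c : Λ → carrier
  c_star : ∀ i, star (c i) = c i
  clifford : ∀ i j, c i * c j + c j * c i = if i = j then (2 : carrier) else 0
  gauge : carrier ≃ₐ[ℂ] carrier
  gauge_c : ∀ i, gauge (c i) = - c i
  Θ : carrier → carrier
  Θ_add : ∀ x y, Θ (x + y) = Θ x + Θ y
  Θ_smul : ∀ (z : ℂ) (x), Θ (z • x) = (starRingEnd ℂ z) • Θ x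
  Θ_mul : ∀ x y, Θ (x * y) = Θ x * Θ y
  Θ_star : ∀ x, Θ (star x) = star (Θ x)
  Θ_invol : ∀ x, Θ (Θ x) = x
  Θ_c : ∀ i, Θ (c i) = c (ϑ i)
  ζ : ℂ
  ζ_sq : ζ ^ 2 = -1
  twist : carrier → carrier → carrier
  twist_add_left : ∀ x x' y, twist (x + x') y = twist x y + twist x' y
  twist_add_right : ∀ x y y', twist x (y + y') = twist x y + twist x y'
  twist_smul_left : ∀ (z : ℂ) (x y), twist (z • x) y = z • twist x y
  twist_smul_right : ∀ (z : ℂ) (x y), twist x (z • y) = z • twist x y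
  twist_spec : ∀ (Am Ap Bm Bp : carrier) (a b a' b' : ℕ),
    a ≤ 1 → b ≤ 1 → a' ≤ 1 → b' ≤ 1 →
    Am ∈ Algebra.adjoin ℂ (c '' {i | i ∉ Λp}) →
    Ap ∈ Algebra.adjoin ℂ (c '' {i | i ∈ Λp}) →
    Bm ∈ Algebra.adjoin ℂ (c '' {i | i ∉ Λp}) →
    Bp ∈ Algebra.adjoin ℂ (c '' {i | i ∈ Λp}) →
    gauge Am = ((-1 : ℂ) ^ a) • Am →
    gauge Ap = ((-1 : ℂ) ^ b) • Ap →
    gauge Bm = ((-1 : ℂ) ^ a') • Bm →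
    gauge Bp = ((-1 : ℂ) ^ b') • Bp →
    twist (Am * Ap) (Bm * Bp)
      = ζ ^ ((a * b' : ℤ) - (b * a' : ℤ)) • (Am * Ap * (Bm * Bp))
  P : Finset (List Λ)
  P_nodup : ∀ J ∈ P, J.Nodup
  P_sub : ∀ J ∈ P, ∀ i ∈ J, i ∈ Λp
  P_unique : ∀ s : Finset Λ, s ⊆ Λp → ∃! J, J ∈ P ∧ J.toFinset = s
  Tr : carrier →ₗ[ℂ] ℂ
  Tr_basis : ∀ J ∈ P, ∀ J' ∈ P,
    Tr (twist (Θ ((J.map c).prod)) ((J'.map c).prod))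
      = if J = [] ∧ J' = [] then 1 else 0
  basis_indep : LinearIndependent ℂ
    (fun p : {J // J ∈ P} × {J // J ∈ P} =>
      twist (Θ ((p.1.1.map c).prod)) ((p.2.1.map c).prod))
  basis_span : ∀ x : carrier, x ∈ Submodule.span ℂ
    (Set.range fun p : {J // J ∈ P} × {J // J ∈ P} =>
      twist (Θ ((p.1.1.map c).prod)) ((p.2.1.map c).prod))
  plus_span : ∀ x ∈ Algebra.adjoin ℂ (c '' {i | i ∈ Λp}),
    x ∈ Submodule.span ℂ (Set.range fun J : {J // J ∈ P} => ((J.1.map c).prod))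

attribute [instance] MajoranaSetting.fintypeΛ MajoranaSetting.deceqΛ
  MajoranaSetting.nring MajoranaSetting.nalg MajoranaSetting.cmpl
  MajoranaSetting.starring MajoranaSetting.starmod

namespace MajoranaSetting

variable (S : MajoranaSetting)

/-- The subalgebra `𝔄₊` generated by the Majoranas on the `+` side. -/
def Aplus : Subalgebra ℂ S.carrier := Algebra.adjoin ℂ (S.c '' {i | i ∈ S.Λp})

/-- The subalgebra `𝔄₋` generated by the Majoranas on the `-` side. -/
def Aminus : Subalgebra ℂ S.carrier := Algebra.adjoin ℂ (S.c '' {i | i ∉ S.Λp})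

/-- The monomial `C_𝔍 = c_{i₁} ⋯ c_{i_k}`. -/
def C (J : List S.Λ) : S.carrier := (J.map S.c).prod

/-- `q_𝔍 = (-1)^{k(k-1)/2}`. -/
def q (J : List S.Λ) : ℂ := (-1 : ℂ) ^ (J.length * (J.length - 1) / 2)

/-- `s_𝔍 = ζ^{k(k-1)/2}`. -/
def sgn (J : List S.Λ) : ℂ := S.ζ ^ (J.length * (J.length - 1) / 2)

/-- The exponential `e^x` in the (finite-dimensional) algebra `𝔄`. -/
def expm (x : S.carrier) : S.carrier := NormedSpace.exp x

/-- The Hamiltonian `H = -∑_{𝔍,𝔍' ∈ 𝒫₊} J_{𝔍𝔍'} Θ(C_𝔍) ∘ C_𝔍'`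
determined by coupling constants `Jc`. -/
def Ham (Jc : List S.Λ → List S.Λ → ℂ) : S.carrier :=
  - ∑ J ∈ S.P, ∑ J' ∈ S.P, Jc J J' • S.twist (S.Θ (S.C J)) (S.C J')

/-- The index type of the basis `{C J : J ∈ 𝒫₊}`. -/
abbrev PIdx := {J : List S.Λ // J ∈ S.P}

/-- The index type `𝒫₊ - {∅}` of couplings across the reflection plane. -/
abbrev PIdx0 := {p : S.PIdx // p.1 ≠ []}

/-- The full matrix of coupling constants. -/
def Jmat (Jc : List S.Λ → List S.Λ → ℂ) : Matrix S.PIdx S.PIdx ℂ :=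
  Matrix.of fun p q => Jc p.1 q.1

/-- The matrix `J⁰` of coupling constants across the reflection plane. -/
def Jmat0 (Jc : List S.Λ → List S.Λ → ℂ) : Matrix S.PIdx0 S.PIdx0 ℂ :=
  Matrix.of fun p q => Jc p.1.1 q.1.1

end MajoranaSetting

/-!
Write `-H = ∑ J_{𝔍𝔍'} Θ(C_𝔍) ∘ C_𝔍'` and factor the positive semidefinite `J` as `∑ᵢ vᵢ vᵢᴴ`.
Gauge invariance forces `J_{𝔍𝔍'} = 0` unless `|𝔍|` and `|𝔍'|` have the same parity, so `-H` is a
sum of reflection squares `Θ(A) ∘ A` with `A ∈ 𝔄₊` homogeneous. The twist `ζ` exactly compensates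
the graded commutation of `𝔄₋` with `𝔄₊`, so these squares are closed under multiplication, and
`Tr(Θ(A) ∘ B) = conj (Tr A) · Tr B`; hence `Tr((-H)ⁿ) ≥ 0` for every `n`. Therefore
`Z_{βH} = ∑ βⁿ/n! · Tr((-H)ⁿ)` is a real power series with non-negative coefficients and constant
term `Tr 1 = 1`.
-/

-- The order on `ℂ` is `ComplexOrder`: `z ≤ w` means that `w - z` is real and non-negative.
open NormedSpace in
theorem monotoneOn_apply_exp_smul {A : Type*} [NormedRing A] [NormedAlgebra ℂ A]
    [CompleteSpace A] (φ : A →L[ℂ] ℂ) {x : A} (hx : ∀ n, 0 ≤ φ (x ^ n)) :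
    MonotoneOn (fun β : ℝ => φ (exp ((β : ℂ) • x))) (Set.Ici 0) := by
  have hsum (β : ℝ) : HasSum (fun n => (n.factorial : ℂ)⁻¹ * ((β : ℂ) ^ n * φ (x ^ n)))
      (φ (exp ((β : ℂ) • x))) := by
    simpa [smul_pow] using (exp_series_hasSum_exp' (𝕂 := ℂ) ((β : ℂ) • x)).mapL φ
  intro β₁ hβ₁ β₂ _ hβ
  refine hasSum_le (fun n => ?_) (hsum β₁) (hsum β₂)
  have hpow : (β₁ : ℂ) ^ n ≤ (β₂ : ℂ) ^ n := by exact_mod_cast pow_le_pow_left₀ hβ₁ hβ n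
  gcongr
  exact hx n

namespace MajoranaSetting

variable (S : MajoranaSetting)

lemma Θ_one : S.Θ 1 = 1 :=
  calc S.Θ 1 = S.Θ 1 * S.Θ (S.Θ 1) := by rw [S.Θ_invol, mul_one]
    _ = 1 := by rw [← S.Θ_mul, one_mul, S.Θ_invol]

lemma C_nil : S.C [] = 1 := rfl

lemma C_cons (i : S.Λ) (J : List S.Λ) : S.C (i :: J) = S.c i * S.C J := by
  simp [C]

lemma gauge_C (J : List S.Λ) : S.gauge (S.C J) = (-1 : ℂ) ^ J.length • S.C J := by
  induction J with
  | nil => simp [C_nil]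
  | cons i J ih =>
    rw [C_cons, map_mul, S.gauge_c, ih, List.length_cons, pow_succ, mul_smul,
      mul_smul_comm, neg_mul, neg_one_smul]

lemma C_mem_Aplus {J : List S.Λ} (hJ : J ∈ S.P) : S.C J ∈ S.Aplus :=
  Subalgebra.list_prod_mem _ fun x hx => by
    obtain ⟨i, hi, rfl⟩ := List.mem_map.mp hx
    exact Algebra.subset_adjoin ⟨i, S.P_sub J hJ i hi, rfl⟩

lemma Θ_mem_Aminus {A : S.carrier} (hA : A ∈ S.Aplus) : S.Θ A ∈ S.Aminus := by
  induction hA using Algebra.adjoin_induction with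
  | mem x hx =>
    obtain ⟨i, hi, rfl⟩ := hx
    rw [S.Θ_c]
    exact Algebra.subset_adjoin ⟨S.ϑ i, (S.ϑ_exch i).mp hi, rfl⟩
  | algebraMap r =>
    rw [Algebra.algebraMap_eq_smul_one, S.Θ_smul, S.Θ_one]
    exact Subalgebra.smul_mem _ (one_mem _) _
  | add x y _ _ hx hy => rw [S.Θ_add]; exact add_mem hx hy
  | mul x y _ _ hx hy => rw [S.Θ_mul]; exact mul_mem hx hy

lemma gauge_Θ {A : S.carrier} (hA : A ∈ S.Aplus) : S.gauge (S.Θ A) = S.Θ (S.gauge A) := by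
  induction hA using Algebra.adjoin_induction with
  | mem x hx =>
    obtain ⟨i, -, rfl⟩ := hx
    rw [S.Θ_c, S.gauge_c, S.gauge_c, ← neg_one_smul ℂ (S.c i), S.Θ_smul, S.Θ_c]
    simp
  | algebraMap r =>
    simp only [Algebra.algebraMap_eq_smul_one, S.Θ_smul, S.Θ_one, map_smul, map_one]
  | add x y _ _ hx hy => rw [S.Θ_add, map_add, map_add, S.Θ_add, hx, hy]
  | mul x y _ _ hx hy => rw [S.Θ_mul, map_mul, map_mul, S.Θ_mul, hx, hy]

lemma c_mul_of_mem_Aminus {i : S.Λ} (hi : i ∈ S.Λp) {y : S.carrier} (hy : y ∈ S.Aminus) :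
    S.c i * y = S.gauge y * S.c i := by
  induction hy using Algebra.adjoin_induction with
  | mem y hy =>
    obtain ⟨j, hj, rfl⟩ := hy
    have hij : i ≠ j := by rintro rfl; exact hj hi
    have h := S.clifford i j
    rw [if_neg hij, add_eq_zero_iff_eq_neg] at h
    rw [S.gauge_c, h, neg_mul]
  | algebraMap r => rw [AlgEquiv.commutes]; exact (Algebra.commutes r _).symm
  | add x y _ _ hx hy => rw [mul_add, hx, hy, map_add, add_mul]
  | mul x y _ _ hx hy => rw [← mul_assoc, hx, mul_assoc, hy, ← mul_assoc, ← map_mul]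

lemma mul_swap_of_mem_Aplus_of_mem_Aminus {x y : S.carrier} (hx : x ∈ S.Aplus)
    (hy : y ∈ S.Aminus) :
    (S.gauge y = y → x * y = y * x) ∧ (S.gauge y = -y → x * y = y * S.gauge x) := by
  induction hx using Algebra.adjoin_induction with
  | mem x hx =>
    obtain ⟨i, hi, rfl⟩ := hx
    rw [S.c_mul_of_mem_Aminus hi hy, S.gauge_c]
    exact ⟨fun h => by rw [h], fun h => by rw [h, neg_mul, mul_neg]⟩
  | algebraMap r =>
    exact ⟨fun _ => Algebra.commutes r y, fun _ => by rw [AlgEquiv.commutes, Algebra.commutes]⟩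
  | add x₁ x₂ _ _ h₁ h₂ =>
    exact ⟨fun h => by rw [add_mul, mul_add, h₁.1 h, h₂.1 h],
      fun h => by rw [add_mul, map_add, mul_add, h₁.2 h, h₂.2 h]⟩
  | mul x₁ x₂ _ _ h₁ h₂ =>
    exact ⟨fun h => by rw [mul_assoc, h₂.1 h, ← mul_assoc, h₁.1 h, mul_assoc],
      fun h => by rw [mul_assoc, h₂.2 h, ← mul_assoc, h₁.2 h, map_mul, mul_assoc]⟩

lemma mul_swap_of_homogeneous {x y : S.carrier} (hx : x ∈ S.Aplus) (hy : y ∈ S.Aminus)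
    {a b : ℕ} (hgx : S.gauge x = (-1 : ℂ) ^ a • x) (hgy : S.gauge y = (-1 : ℂ) ^ b • y) :
    x * y = (-1 : ℂ) ^ (a * b) • (y * x) := by
  rcases Nat.even_or_odd b with hb | hb
  · rw [hb.neg_one_pow, one_smul] at hgy
    rw [(hb.mul_left a).neg_one_pow, one_smul]
    exact (S.mul_swap_of_mem_Aplus_of_mem_Aminus hx hy).1 hgy
  · rw [hb.neg_one_pow, neg_one_smul] at hgy
    rw [(S.mul_swap_of_mem_Aplus_of_mem_Aminus hx hy).2 hgy, hgx, mul_smul_comm, pow_mul',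
      hb.neg_one_pow]

lemma twist_of_mem_Aminus_of_mem_Aplus {y x : S.carrier} (hy : y ∈ S.Aminus)
    (hx : x ∈ S.Aplus) {a b : ℕ} (hgy : S.gauge y = (-1 : ℂ) ^ a • y)
    (hgx : S.gauge x = (-1 : ℂ) ^ b • x) :
    S.twist y x = S.ζ ^ (a % 2 * (b % 2)) • (y * x) := by
  rw [neg_one_pow_eq_pow_mod_two] at hgy hgx
  have h := S.twist_spec y 1 1 x (a % 2) 0 0 (b % 2) (by omega) zero_le_one zero_le_one
    (by omega) hy (one_mem _) (one_mem _) hx hgy (by simp) (by simp) hgx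
  simpa [← zpow_natCast] using h

def AplusDeg (a : ℕ) : Submodule ℂ S.carrier :=
  Subalgebra.toSubmodule S.Aplus ⊓ Module.End.eigenspace S.gauge.toLinearMap ((-1) ^ a)

variable {S}

lemma mem_AplusDeg {a : ℕ} {A : S.carrier} :
    A ∈ S.AplusDeg a ↔ A ∈ S.Aplus ∧ S.gauge A = (-1 : ℂ) ^ a • A := by
  simp [AplusDeg]

lemma one_mem_AplusDeg : (1 : S.carrier) ∈ S.AplusDeg 0 :=
  mem_AplusDeg.mpr ⟨one_mem _, by simp⟩

lemma mul_mem_AplusDeg {a b : ℕ} {A B : S.carrier} (hA : A ∈ S.AplusDeg a)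
    (hB : B ∈ S.AplusDeg b) : A * B ∈ S.AplusDeg (a + b) := by
  rw [mem_AplusDeg] at *
  refine ⟨mul_mem hA.1 hB.1, ?_⟩
  rw [map_mul, hA.2, hB.2, smul_mul_smul_comm, pow_add]

lemma AplusDeg_mod_two (a : ℕ) : S.AplusDeg (a % 2) = S.AplusDeg a := by
  rw [AplusDeg, AplusDeg, ← neg_one_pow_eq_pow_mod_two]

lemma C_mem_AplusDeg {J : List S.Λ} (hJ : J ∈ S.P) : S.C J ∈ S.AplusDeg J.length :=
  mem_AplusDeg.mpr ⟨S.C_mem_Aplus hJ, S.gauge_C J⟩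

lemma gauge_Θ_of_mem_AplusDeg {a : ℕ} {A : S.carrier} (hA : A ∈ S.AplusDeg a) :
    S.gauge (S.Θ A) = (-1 : ℂ) ^ a • S.Θ A := by
  rw [S.gauge_Θ (mem_AplusDeg.mp hA).1, (mem_AplusDeg.mp hA).2, S.Θ_smul]
  simp

variable (S) in
def reflTwist : S.carrier →ₗ⋆[ℂ] S.carrier →ₗ[ℂ] S.carrier :=
  LinearMap.mk₂'ₛₗ (starRingEnd ℂ) (RingHom.id ℂ) (fun A B => S.twist (S.Θ A) B)
    (fun A A' B => by rw [S.Θ_add, S.twist_add_left])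
    (fun z A B => by rw [S.Θ_smul, S.twist_smul_left])
    (fun A B B' => S.twist_add_right _ B B')
    (fun z A B => S.twist_smul_right z _ B)

lemma reflTwist_sum_smul_C (c d : S.PIdx → ℂ) :
    S.reflTwist (∑ p, c p • S.C p) (∑ q, d q • S.C q)
      = ∑ pq : S.PIdx × S.PIdx, (starRingEnd ℂ (c pq.1) * d pq.2) •
          S.reflTwist (S.C pq.1) (S.C pq.2) := by
  simp only [map_sum, map_smulₛₗ, LinearMap.sum_apply, LinearMap.smul_apply, Finset.smul_sum,
    smul_smul, Fintype.sum_prod_type, RingHom.id_apply]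
  rw [Finset.sum_comm]
  simp only [mul_comm]

lemma reflTwist_of_mem_AplusDeg {a b : ℕ} {A B : S.carrier} (hA : A ∈ S.AplusDeg a)
    (hB : B ∈ S.AplusDeg b) : S.reflTwist A B = S.ζ ^ (a % 2 * (b % 2)) • (S.Θ A * B) :=
  S.twist_of_mem_Aminus_of_mem_Aplus (S.Θ_mem_Aminus (mem_AplusDeg.mp hA).1)
    (mem_AplusDeg.mp hB).1 (gauge_Θ_of_mem_AplusDeg hA) (mem_AplusDeg.mp hB).2

lemma reflTwist_one_one : S.reflTwist 1 1 = 1 := by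
  simp [reflTwist_of_mem_AplusDeg one_mem_AplusDeg one_mem_AplusDeg, S.Θ_one]

lemma gauge_reflTwist {a b : ℕ} {A B : S.carrier} (hA : A ∈ S.AplusDeg a)
    (hB : B ∈ S.AplusDeg b) :
    S.gauge (S.reflTwist A B) = (-1 : ℂ) ^ (a + b) • S.reflTwist A B := by
  rw [reflTwist_of_mem_AplusDeg hA hB, map_smul, map_mul, gauge_Θ_of_mem_AplusDeg hA,
    (mem_AplusDeg.mp hB).2, smul_mul_smul_comm, smul_comm, pow_add]

variable (S) in
lemma zeta_pow_parity_mul (a b : ℕ) :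
    S.ζ ^ (a % 2 * (a % 2)) * S.ζ ^ (b % 2 * (b % 2)) * (-1 : ℂ) ^ (a * b)
      = S.ζ ^ ((a + b) % 2 * ((a + b) % 2)) := by
  rw [neg_one_pow_eq_pow_mod_two, Nat.mul_mod, Nat.add_mod]
  rcases Nat.mod_two_eq_zero_or_one a with ha | ha <;>
    rcases Nat.mod_two_eq_zero_or_one b with hb | hb <;>
    simp [ha, hb]
  linear_combination -S.ζ_sq

lemma reflTwist_mul_reflTwist {a b : ℕ} {A B A' B' : S.carrier} (hA : A ∈ S.AplusDeg a)
    (hB : B ∈ S.AplusDeg a) (hA' : A' ∈ S.AplusDeg b) (hB' : B' ∈ S.AplusDeg b) :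
    S.reflTwist A B * S.reflTwist A' B' = S.reflTwist (A * A') (B * B') := by
  have hcomm : B * S.Θ A' = (-1 : ℂ) ^ (a * b) • (S.Θ A' * B) :=
    S.mul_swap_of_homogeneous (mem_AplusDeg.mp hB).1
      (S.Θ_mem_Aminus (mem_AplusDeg.mp hA').1) (mem_AplusDeg.mp hB).2
      (gauge_Θ_of_mem_AplusDeg hA')
  rw [reflTwist_of_mem_AplusDeg hA hB, reflTwist_of_mem_AplusDeg hA' hB',
    reflTwist_of_mem_AplusDeg (mul_mem_AplusDeg hA hA') (mul_mem_AplusDeg hB hB'),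
    smul_mul_smul_comm, mul_assoc, ← mul_assoc B, hcomm, ← S.zeta_pow_parity_mul, S.Θ_mul]
  simp only [smul_mul_assoc, mul_smul_comm, smul_smul, mul_assoc]

lemma nil_mem_P : [] ∈ S.P := by
  obtain ⟨J, ⟨hJ, hJnil⟩, -⟩ := S.P_unique ∅ (Finset.empty_subset _)
  rwa [(List.toFinset_eq_empty_iff J).mp hJnil] at hJ

lemma Tr_reflTwist_C_C {J J' : List S.Λ} (hJ : J ∈ S.P) (hJ' : J' ∈ S.P) :
    S.Tr (S.reflTwist (S.C J) (S.C J')) = if J = [] ∧ J' = [] then 1 else 0 :=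
  S.Tr_basis J hJ J' hJ'

lemma Tr_C {J : List S.Λ} (hJ : J ∈ S.P) : S.Tr (S.C J) = if J = [] then 1 else 0 := by
  have h := Tr_reflTwist_C_C nil_mem_P hJ
  rw [C_nil, reflTwist_of_mem_AplusDeg one_mem_AplusDeg (C_mem_AplusDeg hJ), S.Θ_one] at h
  simpa using h

lemma Tr_one : S.Tr 1 = 1 := by
  simpa [C_nil] using Tr_C (S := S) nil_mem_P

lemma Tr_reflTwist {A B : S.carrier} (hA : A ∈ S.Aplus) (hB : B ∈ S.Aplus) :
    S.Tr (S.reflTwist A B) = starRingEnd ℂ (S.Tr A) * S.Tr B := by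
  replace hA := S.plus_span A hA
  replace hB := S.plus_span B hB
  induction hA using Submodule.span_induction with
  | mem x hx =>
    obtain ⟨J, rfl⟩ := hx
    induction hB using Submodule.span_induction with
    | mem y hy =>
      obtain ⟨J', rfl⟩ := hy
      change S.Tr (S.reflTwist (S.C J) (S.C J')) = starRingEnd ℂ (S.Tr (S.C J)) * S.Tr (S.C J')
      rw [Tr_reflTwist_C_C J.2 J'.2, Tr_C J.2, Tr_C J'.2]
      split_ifs <;> simp_all
    | zero => simp
    | add x y _ _ hx hy => simp [hx, hy, mul_add]
    | smul z x _ hx => simp [hx, mul_left_comm]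
  | zero => simp
  | add x y _ _ hx hy => simp [hx, hy, add_mul]
  | smul z x _ hx => simp [hx, mul_assoc]

lemma neg_Ham_eq_sum (Jc : List S.Λ → List S.Λ → ℂ) :
    -S.Ham Jc = ∑ pq : S.PIdx × S.PIdx, Jc pq.1 pq.2 • S.reflTwist (S.C pq.1) (S.C pq.2) := by
  rw [Ham, neg_neg, Fintype.sum_prod_type, ← Finset.sum_coe_sort S.P]
  exact Finset.sum_congr rfl fun p _ => (Finset.sum_coe_sort S.P _).symm

lemma Jc_eq_zero_of_parity_ne {Jc : List S.Λ → List S.Λ → ℂ}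
    (hGI : S.gauge (S.Ham Jc) = S.Ham Jc) {p q : S.PIdx}
    (hpq : p.1.length % 2 ≠ q.1.length % 2) : Jc p q = 0 := by
  have hgauge : ∀ pq : S.PIdx × S.PIdx, S.gauge (S.reflTwist (S.C pq.1) (S.C pq.2))
      = (-1 : ℂ) ^ (pq.1.1.length + pq.2.1.length) • S.reflTwist (S.C pq.1) (S.C pq.2) :=
    fun pq => gauge_reflTwist (C_mem_AplusDeg pq.1.2) (C_mem_AplusDeg pq.2.2)
  have hsum : ∑ pq : S.PIdx × S.PIdx, (Jc pq.1 pq.2 *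
      ((-1 : ℂ) ^ (pq.1.1.length + pq.2.1.length) - 1)) • S.reflTwist (S.C pq.1) (S.C pq.2)
      = 0 := by
    have h := congrArg Neg.neg hGI
    rw [← map_neg, neg_Ham_eq_sum, map_sum, ← sub_eq_zero, ← Finset.sum_sub_distrib] at h
    simpa only [map_smul, hgauge, smul_smul, mul_sub, mul_one, sub_smul] using h
  have h := Fintype.linearIndependent_iff.mp S.basis_indep _ hsum (p, q)
  have hodd : (p.1.length % 2 + q.1.length % 2) % 2 = 1 := by omega
  rw [neg_one_pow_eq_pow_mod_two, Nat.add_mod, hodd] at h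
  norm_num at h
  exact h

variable (S) in
def reflSquares : Submonoid S.carrier where
  carrier := {x | ∃ (a : ℕ) (A : S.carrier), A ∈ S.AplusDeg a ∧ S.reflTwist A A = x}
  mul_mem' := by
    rintro _ _ ⟨a, A, hA, rfl⟩ ⟨b, B, hB, rfl⟩
    exact ⟨a + b, A * B, mul_mem_AplusDeg hA hB, (reflTwist_mul_reflTwist hA hA hB hB).symm⟩
  one_mem' := ⟨0, 1, one_mem_AplusDeg, reflTwist_one_one⟩

lemma Tr_nonneg_of_mem_subsemiringClosure {x : S.carrier}
    (hx : x ∈ S.reflSquares.subsemiringClosure) : 0 ≤ S.Tr x := by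
  induction hx using AddSubmonoid.closure_induction with
  | mem x hx =>
    obtain ⟨a, A, hA, rfl⟩ := hx
    rw [Tr_reflTwist (mem_AplusDeg.mp hA).1 (mem_AplusDeg.mp hA).1]
    exact star_mul_self_nonneg _
  | zero => simp
  | add x y _ _ hx hy => rw [map_add]; exact add_nonneg hx hy

variable (S) in
def homogPart (c : S.PIdx → ℂ) (ε : ℕ) : S.carrier :=
  ∑ p, (if p.1.length % 2 = ε then c p else 0) • S.C p

lemma homogPart_mem_AplusDeg (c : S.PIdx → ℂ) (ε : ℕ) : S.homogPart c ε ∈ S.AplusDeg ε := by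
  refine Submodule.sum_mem _ fun p _ => ?_
  by_cases h : p.1.length % 2 = ε
  · rw [← h, AplusDeg_mod_two]
    exact Submodule.smul_mem _ _ (C_mem_AplusDeg p.2)
  · simp [h]

lemma neg_Ham_mem_subsemiringClosure {Jc : List S.Λ → List S.Λ → ℂ}
    (hGI : S.gauge (S.Ham Jc) = S.Ham Jc) (hpsd : (S.Jmat Jc).PosSemidef) :
    -S.Ham Jc ∈ S.reflSquares.subsemiringClosure := by
  obtain ⟨m, v, hv⟩ := Matrix.posSemidef_iff_eq_sum_vecMulVec.mp hpsd
  -- `J` is block diagonal in the parity, so each `vᵢ vᵢᴴ` may be replaced by its diagonal blocks.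
  have hcoeff (p q : S.PIdx) : Jc p q = ∑ i, ∑ ε ∈ Finset.range 2,
      starRingEnd ℂ (if p.1.length % 2 = ε then star (v i p) else 0) *
        (if q.1.length % 2 = ε then star (v i q) else 0) := by
    by_cases hpq : p.1.length % 2 = q.1.length % 2
    · have hJ := congrFun (congrFun hv p) q
      simp only [Jmat, Matrix.of_apply, Matrix.sum_apply, Matrix.vecMulVec_apply] at hJ
      simp [hJ, hpq]
      omega
    · rw [Jc_eq_zero_of_parity_ne hGI hpq]
      refine (Finset.sum_eq_zero fun i _ => Finset.sum_eq_zero fun ε _ => ?_).symm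
      split_ifs <;> simp_all
  have hsum : -S.Ham Jc = ∑ i, ∑ ε ∈ Finset.range 2,
      S.reflTwist (S.homogPart (star (v i)) ε) (S.homogPart (star (v i)) ε) := by
    simp only [homogPart, reflTwist_sum_smul_C]
    conv_rhs => enter [2, i]; rw [Finset.sum_comm]
    rw [Finset.sum_comm, neg_Ham_eq_sum]
    simp only [hcoeff, Finset.sum_smul, Pi.star_apply]
  rw [hsum]
  exact sum_mem fun i _ => sum_mem fun ε _ =>
    AddSubmonoid.subset_closure ⟨ε, _, homogPart_mem_AplusDeg _ ε, rfl⟩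

instance : FiniteDimensional ℂ S.carrier :=
  Module.Finite.of_basis (Module.Basis.mk S.basis_indep fun x _ => S.basis_span x)

lemma Tr_pow_neg_Ham_nonneg {Jc : List S.Λ → List S.Λ → ℂ}
    (hGI : S.gauge (S.Ham Jc) = S.Ham Jc) (hpsd : (S.Jmat Jc).PosSemidef) (n : ℕ) :
    0 ≤ S.Tr ((-S.Ham Jc) ^ n) :=
  Tr_nonneg_of_mem_subsemiringClosure (pow_mem (neg_Ham_mem_subsemiringClosure hGI hpsd) n)

end MajoranaSetting

theorem partition_sum_monotone_general (S : MajoranaSetting)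
    (Jc : List S.Λ → List S.Λ → ℂ)
    (hGI : S.gauge (S.Ham Jc) = S.Ham Jc)
    (hpsd : (S.Jmat Jc).PosSemidef) :
    (S.Tr (S.expm (-(((0 : ℝ) : ℂ) • S.Ham Jc))) = 1) ∧
    (∀ β₁ β₂ : ℝ, 0 ≤ β₁ → β₁ ≤ β₂ →
      (S.Tr (S.expm (-((β₁ : ℂ) • S.Ham Jc)))).re
        ≤ (S.Tr (S.expm (-((β₂ : ℂ) • S.Ham Jc)))).re) ∧
    (∀ β : ℝ, 0 ≤ β →
      (S.Tr (S.expm (-((β : ℂ) • S.Ham Jc)))).im = 0 ∧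
      1 ≤ (S.Tr (S.expm (-((β : ℂ) • S.Ham Jc)))).re) := by
  have hmono : MonotoneOn (fun β : ℝ => S.Tr (S.expm (-((β : ℂ) • S.Ham Jc)))) (Set.Ici 0) := by
    simpa [MajoranaSetting.expm] using monotoneOn_apply_exp_smul
      (LinearMap.toContinuousLinearMap S.Tr) (MajoranaSetting.Tr_pow_neg_Ham_nonneg hGI hpsd)
  have hZ0 : S.Tr (S.expm (-(((0 : ℝ) : ℂ) • S.Ham Jc))) = 1 := by
    simp [MajoranaSetting.expm, MajoranaSetting.Tr_one]
  refine ⟨hZ0, fun β₁ β₂ hβ₁ hβ => (Complex.le_def.mp (hmono hβ₁ (hβ₁.trans hβ) hβ)).1,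
    fun β hβ => ?_⟩
  have h := Complex.le_def.mp (hmono Set.self_mem_Ici hβ hβ)
  simp only [hZ0] at h
  exact ⟨by simpa using h.2.symm, by simpa using h.1⟩

/-- if the full coupling matrix `J` of the reflection-invariant,
globally gauge-invariant Hamiltonian `H` is positive semidefinite, then
`Z_{βH} = Tr(e^{-βH})` is real and non-decreasing in `β ≥ 0`, with `Z_0 = 1`;
in particular `1 ≤ Z_{βH}` for all `β ≥ 0`. -/
theorem partition_sum_monotone (S : MajoranaSetting)
    (Jc : List S.Λ → List S.Λ → ℂ)
    (hRI : S.Θ (S.Ham Jc) = S.Ham Jc)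
    (hGI : S.gauge (S.Ham Jc) = S.Ham Jc)
    (hpsd : (S.Jmat Jc).PosSemidef) :
    (S.Tr (S.expm (-(((0 : ℝ) : ℂ) • S.Ham Jc))) = 1) ∧
    (∀ β₁ β₂ : ℝ, 0 ≤ β₁ → β₁ ≤ β₂ →
      (S.Tr (S.expm (-((β₁ : ℂ) • S.Ham Jc)))).re
        ≤ (S.Tr (S.expm (-((β₂ : ℂ) • S.Ham Jc)))).re) ∧
    (∀ β : ℝ, 0 ≤ β →
      (S.Tr (S.expm (-((β : ℂ) • S.Ham Jc)))).im = 0 ∧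
      1 ≤ (S.Tr (S.expm (-((β : ℂ) • S.Ham Jc)))).re) :=
  partition_sum_monotone_general S Jc hGI hpsd
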